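/- For any two nested distributions P and P̃ of the same depth T and dimension D, the nested distance between their 1-clairvoyant versions equals the Kantorovich–Wasserstein distance between the laws of the two scenario processes on ℝ^{D·T}: dl(P_{c(1)}, P̃_{c(1)}) = d_KA(P ∘ ξ^{−1}, P̃ ∘ ξ̃^{−1}). -/

import Mathlib

open MeasureTheory ProbabilityTheory

noncomputable section

abbrev EucSp (D : ℕ) := EuclideanSpace ℝ (Fin D)

/-- Path space for `k` stages: the `ℓ¹`-product of Euclidean spaces `ℝ^D`, so that
`‖u - v‖ = ∑ t, ‖u t - v t‖` is the distance used for paths. -/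
abbrev PathSpace (k D : ℕ) := PiLp 1 (fun _ : Fin k => EucSp D)

instance (k D : ℕ) : MeasurableSpace (PathSpace k D) :=
  MeasurableSpace.comap WithLp.ofLp MeasurableSpace.pi
instance (k D : ℕ) : BorelSpace (PathSpace k D) := PiLp.borelSpace _

/-- A nested distribution of depth `T` and dimension `D`: a probability space together with
a filtration `F` and an `ℝ^D`-valued scenario process `ξ` (relevant stages `1, …, T`)
adapted to the filtration. -/
structure NestedDistribution (T D : ℕ) where
  Ω : Type
  m : MeasurableSpace Ω
  P : @MeasureTheory.Measure Ω m
  prob : @MeasureTheory.IsProbabilityMeasure Ω m P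
  F : ℕ → MeasurableSpace Ω
  F_mono : Monotone F
  F_le : ∀ t, F t ≤ m
  ξ : ℕ → Ω → EucSp D
  adapted : ∀ t, @Measurable _ _ (F t) _ (ξ t)

attribute [instance] NestedDistribution.m

/-- The Kantorovich–Wasserstein distance (of order 1) between two Borel probability
measures on a normed space: `inf_π ∫ ‖x - y‖ dπ` over all couplings `π` of `μ` and `ν`. -/
def kantorovich {E : Type*} [NormedAddCommGroup E] [MeasurableSpace E]
    (μ ν : Measure E) : ℝ :=
  sInf {r : ℝ | ∃ π : Measure (E × E), IsProbabilityMeasure π ∧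
    π.map Prod.fst = μ ∧ π.map Prod.snd = ν ∧ r = ∫ p, ‖p.1 - p.2‖ ∂π}

/-- The (topological) support of a measure: points all of whose open neighbourhoods have
positive measure. -/
def measSupport {α : Type*} [TopologicalSpace α] [MeasurableSpace α] (μ : Measure α) :
    Set α :=
  {x | ∀ U : Set α, IsOpen U → x ∈ U → 0 < μ U}

namespace NestedDistribution

/-- A bicausal coupling of two nested distributions: a coupling `π` of the two probability
measures such that for every stage `t = 1, …, T`, conditionally on `F t ⊗ F̃ t`, the
`π`-probability of `A × Ω̃` (for `A ∈ F T`) agrees with `P(A | F t)`, and symmetrically. -/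
def IsBicausalCoupling {T D : ℕ} (N M : NestedDistribution T D)
    (π : Measure (N.Ω × M.Ω)) : Prop :=
  IsProbabilityMeasure π ∧ π.map Prod.fst = N.P ∧ π.map Prod.snd = M.P ∧
  (∀ t, 1 ≤ t → t ≤ T → ∀ A : Set N.Ω, MeasurableSet[N.F T] A →
    (π[((A ×ˢ (Set.univ : Set M.Ω)).indicator fun _ => (1 : ℝ)) | (N.F t).prod (M.F t)])
      =ᵐ[π] fun p => (N.P[(A.indicator fun _ => (1 : ℝ)) | N.F t]) p.1) ∧
  (∀ t, 1 ≤ t → t ≤ T → ∀ B : Set M.Ω, MeasurableSet[M.F T] B →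
    (π[(((Set.univ : Set N.Ω) ×ˢ B).indicator fun _ => (1 : ℝ)) | (N.F t).prod (M.F t)])
      =ᵐ[π] fun p => (M.P[(B.indicator fun _ => (1 : ℝ)) | M.F t]) p.2)

/-- The nested distance of order 1 between two nested distributions:
`inf_π ∫ ∑_{t=1}^T ‖ξ_t(u) - ξ̃_t(v)‖ dπ(u,v)` over all bicausal couplings `π`. -/
def dist {T D : ℕ} (N M : NestedDistribution T D) : ℝ :=
  sInf {r : ℝ | ∃ π : Measure (N.Ω × M.Ω), IsBicausalCoupling N M π ∧
    r = ∫ p, ∑ t ∈ Finset.Icc 1 T, ‖N.ξ t p.1 - M.ξ t p.2‖ ∂π}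

/-- Truncation of a nested distribution to stages `1, …, t`. -/
def truncate {T D : ℕ} (N : NestedDistribution T D) (t : ℕ) : NestedDistribution t D :=
  ⟨N.Ω, N.m, N.P, N.prob, N.F, N.F_mono, N.F_le, N.ξ, N.adapted⟩

/-- The `t`-clairvoyant version of a nested distribution: the filtration is unchanged
before stage `t` and equals `F T` from stage `t` on. -/
def clairvoyant {T D : ℕ} (N : NestedDistribution T D) (t : ℕ) : NestedDistribution T D where
  Ω := N.Ω
  m := N.m
  P := N.P
  prob := N.prob
  F := fun s => if s < t then N.F s else N.F (max s T)
  F_mono := by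
    intro a b hab
    dsimp only
    by_cases hb : b < t
    · have ha : a < t := lt_of_le_of_lt hab hb
      simpa [ha, hb] using N.F_mono hab
    · by_cases ha : a < t
      · simpa [ha, hb] using N.F_mono (le_trans hab (le_max_left b T))
      · simpa [ha, hb] using N.F_mono (max_le_max hab le_rfl)
  F_le := by
    intro s; try dsimp only
    split <;> exact N.F_le _
  ξ := N.ξ
  adapted := by
    intro s; try dsimp only
    show @Measurable _ _ (if s < t then N.F s else N.F (max s T)) _ (N.ξ s)
    by_cases h : s < t
    · rw [if_pos h]; exact N.adapted s
    · rw [if_neg h]; exact (N.adapted s).mono (N.F_mono (le_max_left s T)) le_rfl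

/-- The history map up to stage `k`: `ω ↦ (ξ 1 ω, …, ξ k ω)`. -/
def hist {T D : ℕ} (N : NestedDistribution T D) (k : ℕ) : N.Ω → PathSpace k D :=
  fun ω => WithLp.toLp 1 (fun s : Fin k => N.ξ (s.1 + 1) ω)

lemma measurable_hist {T D : ℕ} (N : NestedDistribution T D) (k : ℕ) :
    Measurable (N.hist k) :=
  (WithLp.measurable_toLp 1 _).comp <| measurable_pi_lambda _ fun s : Fin k => (N.adapted (s.1 + 1)).mono (N.F_le _) le_rfl

/-- The law of the history `(ξ 1, …, ξ k)`. -/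
def histLaw {T D : ℕ} (N : NestedDistribution T D) (k : ℕ) : Measure (PathSpace k D) :=
  N.P.map (N.hist k)

/-- The law of the whole scenario path `(ξ 1, …, ξ T)` on `ℝ^{D·T}`. -/
def pathLaw {T D : ℕ} (N : NestedDistribution T D) : Measure (PathSpace T D) :=
  N.P.map (N.hist T)

end NestedDistribution

section AuxLift
open Metric ENNReal

theorem exists_partition (E : Type*) [MetricSpace E] [MeasurableSpace E] [BorelSpace E]
    [TopologicalSpace.SeparableSpace E] [Nonempty E] {r : ℝ} (hr : 0 < r) :
    ∃ B : ℕ → Set E, (∀ n, MeasurableSet (B n)) ∧ Pairwise (Function.onFun Disjoint B) ∧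
      (⋃ n, B n) = Set.univ ∧ ∀ n, ∀ a ∈ B n, ∀ b ∈ B n, dist a b ≤ 2 * r := by
  set e := TopologicalSpace.denseSeq E with he
  refine ⟨fun n => closedBall (e n) r \ ⋃ m < n, closedBall (e m) r, fun n => ?_, ?_, ?_, ?_⟩
  · exact measurableSet_closedBall.diff
      (MeasurableSet.biUnion (Set.to_countable _) fun m _ => measurableSet_closedBall)
  · have key : ∀ m n : ℕ, m < n →
        Disjoint (closedBall (e m) r \ ⋃ k < m, closedBall (e k) r)
          (closedBall (e n) r \ ⋃ k < n, closedBall (e k) r) := by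
      intro m n hmn
      rw [Set.disjoint_left]
      intro x hxm hxn
      exact hxn.2 (Set.mem_biUnion hmn hxm.1)
    intro m n hmn
    rcases lt_or_gt_of_ne hmn with h | h
    · exact key m n h
    · exact (key n m h).symm
  · classical
    refine Set.eq_univ_of_forall fun x => ?_
    have hex : ∃ n, x ∈ closedBall (e n) r := by
      obtain ⟨n, hn⟩ := (Metric.denseRange_iff.1 (TopologicalSpace.denseRange_denseSeq E)) x r hr
      exact ⟨n, (mem_closedBall.2 hn.le)⟩
    refine Set.mem_iUnion.2 ⟨Nat.find hex, Nat.find_spec hex, fun hmem => ?_⟩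
    obtain ⟨m, hm⟩ := Set.mem_iUnion.1 hmem
    obtain ⟨hmlt, hxm⟩ := Set.mem_iUnion.1 hm
    exact Nat.find_min hex hmlt hxm
  · intro n a ha b hb
    calc dist a b ≤ dist a (e n) + dist (e n) b := dist_triangle _ _ _
      _ ≤ r + r := add_le_add (mem_closedBall.1 ha.1) (by
          rw [dist_comm]; exact mem_closedBall.1 hb.1)
      _ = 2 * r := by ring

set_option maxSynthPendingDepth 5 in
theorem lift_coupling {α β E : Type*} [MeasurableSpace α] [MeasurableSpace β]
    [NormedAddCommGroup E] [MeasurableSpace E] [BorelSpace E]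
    [TopologicalSpace.SeparableSpace E] [Nonempty E]
    (P : Measure α) (Q : Measure β) [IsProbabilityMeasure P] [IsProbabilityMeasure Q]
    {f : α → E} {g : β → E} (hf : Measurable f) (hg : Measurable g)
    (γ : Measure (E × E))
    (h1 : γ.map Prod.fst = P.map f) (h2 : γ.map Prod.snd = Q.map g)
    {δ : ℝ} (hδ : 0 < δ) :
    ∃ π : Measure (α × β), IsProbabilityMeasure π ∧ π.map Prod.fst = P ∧
      π.map Prod.snd = Q ∧
      (∫⁻ p, ENNReal.ofReal ‖f p.1 - g p.2‖ ∂π) ≤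
        (∫⁻ q : E × E, ENNReal.ofReal ‖q.1 - q.2‖ ∂γ) + ENNReal.ofReal δ ∧
      (∫⁻ q : E × E, ENNReal.ofReal ‖q.1 - q.2‖ ∂γ) ≤
        (∫⁻ p, ENNReal.ofReal ‖f p.1 - g p.2‖ ∂π) + ENNReal.ofReal δ := by
  classical
  set r : ℝ := δ / 8 with hrdef
  have hr : 0 < r := by positivity
  obtain ⟨B, hBm, hBd, hBu, hBdiam⟩ := exists_partition E hr
  set x : ℕ → E := fun n => if h : (B n).Nonempty then h.choose else Classical.arbitrary E
    with hxdef
  have hx : ∀ n, (B n).Nonempty → x n ∈ B n := by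
    intro n hn
    simp only [hxdef, dif_pos hn]
    exact hn.choose_spec
  -- marginal identities for γ
  have hγfst : ∀ s : Set E, MeasurableSet s → γ (s ×ˢ Set.univ) = P (f ⁻¹' s) := by
    intro s hs
    rw [Set.prod_univ, ← Measure.map_apply measurable_fst hs, h1,
      Measure.map_apply hf hs]
  have hγsnd : ∀ t : Set E, MeasurableSet t → γ (Set.univ ×ˢ t) = Q (g ⁻¹' t) := by
    intro t ht
    rw [Set.univ_prod, ← Measure.map_apply measurable_snd ht, h2,
      Measure.map_apply hg ht]
  -- the building blocks
  set m : ℕ → ENNReal := fun i => P (f ⁻¹' B i) with hmdef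
  set n : ℕ → ENNReal := fun j => Q (g ⁻¹' B j) with hndef
  set Pm : ℕ → Measure α := fun i => (m i)⁻¹ • P.restrict (f ⁻¹' B i) with hPmdef
  set Qm : ℕ → Measure β := fun j => (n j)⁻¹ • Q.restrict (g ⁻¹' B j) with hQmdef
  set w : ℕ × ℕ → ENNReal := fun ij => γ (B ij.1 ×ˢ B ij.2) with hwdef
  set π : Measure (α × β) := Measure.sum fun ij : ℕ × ℕ => w ij • ((Pm ij.1).prod (Qm ij.2))
    with hπdef
  have hm_top : ∀ i, m i ≠ ⊤ := fun i => (measure_lt_top P _).ne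
  have hn_top : ∀ j, n j ≠ ⊤ := fun j => (measure_lt_top Q _).ne
  have hw_le_m : ∀ ij : ℕ × ℕ, w ij ≤ m ij.1 := by
    intro ij
    show γ (B ij.1 ×ˢ B ij.2) ≤ P (f ⁻¹' B ij.1)
    rw [← hγfst _ (hBm ij.1)]
    exact measure_mono (Set.prod_mono subset_rfl (Set.subset_univ _))
  have hw_le_n : ∀ ij : ℕ × ℕ, w ij ≤ n ij.2 := by
    intro ij
    show γ (B ij.1 ×ˢ B ij.2) ≤ Q (g ⁻¹' B ij.2)
    rw [← hγsnd _ (hBm ij.2)]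
    exact measure_mono (Set.prod_mono (Set.subset_univ _) subset_rfl)
  have hPm_univ : ∀ i, m i ≠ 0 → Pm i Set.univ = 1 := by
    intro i hi
    show ((m i)⁻¹ • P.restrict (f ⁻¹' B i)) Set.univ = 1
    simp only [Measure.smul_apply, Measure.restrict_apply_univ, smul_eq_mul]
    exact ENNReal.inv_mul_cancel hi (hm_top i)
  have hQm_univ : ∀ j, n j ≠ 0 → Qm j Set.univ = 1 := by
    intro j hj
    show ((n j)⁻¹ • Q.restrict (g ⁻¹' B j)) Set.univ = 1
    simp only [Measure.smul_apply, Measure.restrict_apply_univ, smul_eq_mul]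
    exact ENNReal.inv_mul_cancel hj (hn_top j)
  have hπapp : ∀ s : Set (α × β), MeasurableSet s →
      π s = ∑' ij : ℕ × ℕ, w ij * ((Pm ij.1).prod (Qm ij.2)) s := by
    intro s hs
    rw [hπdef, Measure.sum_apply _ hs]
    simp only [Measure.smul_apply, smul_eq_mul]
  -- first marginal
  have hfst : π.map Prod.fst = P := by
    refine Measure.ext fun s hs => ?_
    rw [Measure.map_apply measurable_fst hs, ← Set.prod_univ,
      hπapp _ (hs.prod MeasurableSet.univ)]
    have hterm : ∀ ij : ℕ × ℕ, w ij * ((Pm ij.1).prod (Qm ij.2)) (s ×ˢ Set.univ)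
        = w ij * Pm ij.1 s := by
      intro ij
      by_cases hij : w ij = 0
      · simp [hij]
      · have hnj : n ij.2 ≠ 0 := fun h => hij (le_antisymm ((hw_le_n ij).trans h.le) zero_le)
        haveI : SFinite (Qm ij.2) := by
          show SFinite ((n ij.2)⁻¹ • Q.restrict (g ⁻¹' B ij.2)); infer_instance
        rw [Measure.prod_prod, hQm_univ _ hnj, mul_one]
    rw [tsum_congr hterm]
    have hstep : ∑' ij : ℕ × ℕ, w ij * Pm ij.1 s = ∑' i : ℕ, m i * Pm i s := by
      rw [ENNReal.tsum_prod']
      refine tsum_congr fun i => ?_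
      show ∑' j, w (i, j) * Pm i s = m i * Pm i s
      rw [ENNReal.tsum_mul_right]
      congr 1
      show (∑' j, γ (B i ×ˢ B j)) = P (f ⁻¹' B i)
      rw [← hγfst _ (hBm i)]
      have hU : B i ×ˢ Set.univ = ⋃ j, B i ×ˢ B j := by
        rw [← Set.prod_iUnion, hBu]
      rw [hU, measure_iUnion ?_ fun j => (hBm i).prod (hBm j)]
      intro j j' hjj'
      rw [Function.onFun, Set.disjoint_left]
      rintro ⟨u, v⟩ ⟨_, hv⟩ ⟨_, hv'⟩
      exact Set.disjoint_left.1 (hBd hjj') hv hv'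
    rw [hstep]
    have hterm2 : ∀ i : ℕ, m i * Pm i s = P (s ∩ f ⁻¹' B i) := by
      intro i
      by_cases hi : m i = 0
      · have h0 : P (s ∩ f ⁻¹' B i) = 0 :=
          measure_mono_null Set.inter_subset_right hi
        rw [hi, zero_mul, h0]
      · rw [hPmdef]
        simp only [Measure.smul_apply, smul_eq_mul, Measure.restrict_apply hs]
        rw [← mul_assoc, ENNReal.mul_inv_cancel hi (hm_top i), one_mul]
    rw [tsum_congr hterm2]
    rw [← measure_iUnion ?_ fun i => hs.inter (hf (hBm i))]
    · congr 1
      rw [← Set.inter_iUnion, ← Set.preimage_iUnion, hBu]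
      simp
    · intro i i' hii'
      rw [Function.onFun, Set.disjoint_left]
      rintro a ⟨_, ha⟩ ⟨_, ha'⟩
      exact Set.disjoint_left.1 (hBd hii') ha ha'
  -- second marginal
  have hsnd : π.map Prod.snd = Q := by
    refine Measure.ext fun t ht => ?_
    rw [Measure.map_apply measurable_snd ht, ← Set.univ_prod,
      hπapp _ (MeasurableSet.univ.prod ht)]
    have hterm : ∀ ij : ℕ × ℕ, w ij * ((Pm ij.1).prod (Qm ij.2)) (Set.univ ×ˢ t)
        = w ij * Qm ij.2 t := by
      intro ij
      by_cases hij : w ij = 0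
      · simp [hij]
      · have hmi : m ij.1 ≠ 0 := fun h => hij (le_antisymm ((hw_le_m ij).trans h.le) zero_le)
        haveI : SFinite (Qm ij.2) := by
          show SFinite ((n ij.2)⁻¹ • Q.restrict (g ⁻¹' B ij.2)); infer_instance
        rw [Measure.prod_prod, hPm_univ _ hmi, one_mul]
    rw [tsum_congr hterm]
    have hstep : ∑' ij : ℕ × ℕ, w ij * Qm ij.2 t = ∑' j : ℕ, n j * Qm j t := by
      rw [ENNReal.tsum_prod', ENNReal.tsum_comm]
      refine tsum_congr fun j => ?_
      show ∑' i, w (i, j) * Qm j t = n j * Qm j t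
      rw [ENNReal.tsum_mul_right]
      congr 1
      show (∑' i, γ (B i ×ˢ B j)) = Q (g ⁻¹' B j)
      rw [← hγsnd _ (hBm j)]
      have hU : Set.univ ×ˢ B j = ⋃ i, B i ×ˢ B j := by
        rw [← Set.iUnion_prod_const, hBu]
      rw [hU, measure_iUnion ?_ fun i => (hBm i).prod (hBm j)]
      intro i i' hii'
      rw [Function.onFun, Set.disjoint_left]
      rintro ⟨u, v⟩ ⟨hu, _⟩ ⟨hu', _⟩
      exact Set.disjoint_left.1 (hBd hii') hu hu'
    rw [hstep]
    have hterm2 : ∀ j : ℕ, n j * Qm j t = Q (t ∩ g ⁻¹' B j) := by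
      intro j
      by_cases hj : n j = 0
      · have h0 : Q (t ∩ g ⁻¹' B j) = 0 :=
          measure_mono_null Set.inter_subset_right hj
        rw [hj, zero_mul, h0]
      · rw [hQmdef]
        simp only [Measure.smul_apply, smul_eq_mul, Measure.restrict_apply ht]
        rw [← mul_assoc, ENNReal.mul_inv_cancel hj (hn_top j), one_mul]
    rw [tsum_congr hterm2]
    rw [← measure_iUnion ?_ fun j => ht.inter (hg (hBm j))]
    · congr 1
      rw [← Set.inter_iUnion, ← Set.preimage_iUnion, hBu]
      simp
    · intro j j' hjj'
      rw [Function.onFun, Set.disjoint_left]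
      rintro b ⟨_, hb⟩ ⟨_, hb'⟩
      exact Set.disjoint_left.1 (hBd hjj') hb hb'
  have hπprob : IsProbabilityMeasure π := by
    constructor
    have : (π.map Prod.fst) Set.univ = π Set.univ := by
      rw [Measure.map_apply measurable_fst MeasurableSet.univ, Set.preimage_univ]
    rw [← this, hfst]
    exact measure_univ
  -- cost estimates
  set κ : ℝ≥0∞ := ENNReal.ofReal (4 * r) with hκdef
  set d : ℕ × ℕ → ℝ≥0∞ := fun ij => ENNReal.ofReal ‖x ij.1 - x ij.2‖ with hddef
  have hκκ : κ + κ = ENNReal.ofReal δ := by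
    rw [hκdef, ← ENNReal.ofReal_add (by positivity) (by positivity)]
    congr 1
    rw [hrdef]; ring
  have hptwise : ∀ ij : ℕ × ℕ, ∀ a ∈ B ij.1, ∀ b ∈ B ij.2,
      ENNReal.ofReal ‖a - b‖ ≤ d ij + κ ∧ d ij ≤ ENNReal.ofReal ‖a - b‖ + κ := by
    intro ij a ha b hb
    have hxi : x ij.1 ∈ B ij.1 := hx _ ⟨a, ha⟩
    have hxj : x ij.2 ∈ B ij.2 := hx _ ⟨b, hb⟩
    have h1 : dist a (x ij.1) ≤ 2 * r := hBdiam _ _ ha _ hxi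
    have h2 : dist (x ij.2) b ≤ 2 * r := hBdiam _ _ hxj _ hb
    constructor
    · have hre : ‖a - b‖ ≤ ‖x ij.1 - x ij.2‖ + 4 * r := by
        rw [← dist_eq_norm, ← dist_eq_norm]
        calc dist a b ≤ dist a (x ij.1) + dist (x ij.1) (x ij.2) + dist (x ij.2) b :=
              dist_triangle4 _ _ _ _
          _ ≤ 2 * r + dist (x ij.1) (x ij.2) + 2 * r := by
              gcongr
          _ = dist (x ij.1) (x ij.2) + 4 * r := by ring
      calc ENNReal.ofReal ‖a - b‖ ≤ ENNReal.ofReal (‖x ij.1 - x ij.2‖ + 4 * r) :=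
            ENNReal.ofReal_le_ofReal hre
        _ = d ij + κ := by
            rw [ENNReal.ofReal_add (norm_nonneg _) (by positivity)]
    · have hre : ‖x ij.1 - x ij.2‖ ≤ ‖a - b‖ + 4 * r := by
        rw [← dist_eq_norm, ← dist_eq_norm]
        calc dist (x ij.1) (x ij.2) ≤ dist (x ij.1) a + dist a b + dist b (x ij.2) :=
              dist_triangle4 _ _ _ _
          _ ≤ 2 * r + dist a b + 2 * r := by
              gcongr
              · rw [dist_comm]; exact h1
              · rw [dist_comm]; exact h2
          _ = dist a b + 4 * r := by ring
      calc d ij ≤ ENNReal.ofReal (‖a - b‖ + 4 * r) := ENNReal.ofReal_le_ofReal hre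
        _ = ENNReal.ofReal ‖a - b‖ + κ := by
            rw [ENNReal.ofReal_add (norm_nonneg _) (by positivity)]
  -- per-cell bounds for π
  have hcellπ : ∀ ij : ℕ × ℕ, w ij ≠ 0 →
      (∫⁻ p, ENNReal.ofReal ‖f p.1 - g p.2‖ ∂((Pm ij.1).prod (Qm ij.2)) ≤ d ij + κ) ∧
      (d ij ≤ ∫⁻ p, ENNReal.ofReal ‖f p.1 - g p.2‖ ∂((Pm ij.1).prod (Qm ij.2)) + κ) := by
    intro ij hij
    have hmi : m ij.1 ≠ 0 := fun h => hij (le_antisymm ((hw_le_m ij).trans h.le) zero_le)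
    have hnj : n ij.2 ≠ 0 := fun h => hij (le_antisymm ((hw_le_n ij).trans h.le) zero_le)
    haveI : SFinite (Qm ij.2) := by
      show SFinite ((n ij.2)⁻¹ • Q.restrict (g ⁻¹' B ij.2)); infer_instance
    have hPu : Pm ij.1 Set.univ = 1 := hPm_univ _ hmi
    have hQu : Qm ij.2 Set.univ = 1 := hQm_univ _ hnj
    have hprodu : ((Pm ij.1).prod (Qm ij.2)) Set.univ = 1 := by
      rw [← Set.univ_prod_univ, Measure.prod_prod, hPu, hQu, mul_one]
    have hA0 : (Pm ij.1) ((f ⁻¹' B ij.1)ᶜ) = 0 := by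
      show ((m ij.1)⁻¹ • P.restrict (f ⁻¹' B ij.1)) ((f ⁻¹' B ij.1)ᶜ) = 0
      simp only [Measure.smul_apply, smul_eq_mul,
        Measure.restrict_apply (hf (hBm ij.1)).compl]
      rw [Set.compl_inter_self, measure_empty, mul_zero]
    have hB0 : (Qm ij.2) ((g ⁻¹' B ij.2)ᶜ) = 0 := by
      show ((n ij.2)⁻¹ • Q.restrict (g ⁻¹' B ij.2)) ((g ⁻¹' B ij.2)ᶜ) = 0
      simp only [Measure.smul_apply, smul_eq_mul,
        Measure.restrict_apply (hg (hBm ij.2)).compl]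
      rw [Set.compl_inter_self, measure_empty, mul_zero]
    have hae : ∀ᵐ p ∂((Pm ij.1).prod (Qm ij.2)), f p.1 ∈ B ij.1 ∧ g p.2 ∈ B ij.2 := by
      rw [MeasureTheory.ae_iff]
      have hU0 : ((Pm ij.1).prod (Qm ij.2))
          ((((f ⁻¹' B ij.1)ᶜ) ×ˢ (Set.univ : Set β)) ∪
            ((Set.univ : Set α) ×ˢ ((g ⁻¹' B ij.2)ᶜ))) = 0 :=
        measure_union_null (by rw [Measure.prod_prod, hA0, zero_mul])
          (by rw [Measure.prod_prod, hB0, mul_zero])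
      refine measure_mono_null (fun p hp => ?_) hU0
      simp only [Set.mem_setOf_eq, not_and_or] at hp
      rcases hp with hp | hp
      · exact Or.inl ⟨hp, Set.mem_univ _⟩
      · exact Or.inr ⟨Set.mem_univ _, hp⟩
    constructor
    · calc ∫⁻ p, ENNReal.ofReal ‖f p.1 - g p.2‖ ∂((Pm ij.1).prod (Qm ij.2))
          ≤ ∫⁻ _, (d ij + κ) ∂((Pm ij.1).prod (Qm ij.2)) := by
            refine lintegral_mono_ae ?_
            filter_upwards [hae] with p hp
            exact (hptwise ij _ hp.1 _ hp.2).1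
        _ = d ij + κ := by rw [lintegral_const, hprodu, mul_one]
    · calc d ij = ∫⁻ _, d ij ∂((Pm ij.1).prod (Qm ij.2)) := by
            rw [lintegral_const, hprodu, mul_one]
        _ ≤ ∫⁻ p, (ENNReal.ofReal ‖f p.1 - g p.2‖ + κ) ∂((Pm ij.1).prod (Qm ij.2)) := by
            refine lintegral_mono_ae ?_
            filter_upwards [hae] with p hp
            exact (hptwise ij _ hp.1 _ hp.2).2
        _ = ∫⁻ p, ENNReal.ofReal ‖f p.1 - g p.2‖ ∂((Pm ij.1).prod (Qm ij.2)) + κ := by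
            rw [lintegral_add_right _ measurable_const, lintegral_const, hprodu, mul_one]
  -- per-cell bounds for γ
  have hScell_meas : ∀ ij : ℕ × ℕ, MeasurableSet (B ij.1 ×ˢ B ij.2) :=
    fun ij => (hBm ij.1).prod (hBm ij.2)
  have hScell_disj : Pairwise (Function.onFun Disjoint fun ij : ℕ × ℕ => B ij.1 ×ˢ B ij.2) := by
    intro ij ij' hne
    rw [Function.onFun, Set.disjoint_left]
    rintro ⟨u, v⟩ ⟨hu, hv⟩ ⟨hu', hv'⟩
    by_cases hii : ij.1 = ij'.1
    · have hjj : ij.2 ≠ ij'.2 := fun h => hne (Prod.ext hii h)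
      exact Set.disjoint_left.1 (hBd hjj) hv hv'
    · exact Set.disjoint_left.1 (hBd hii) hu hu'
  have hScell_cover : (⋃ ij : ℕ × ℕ, B ij.1 ×ˢ B ij.2) = Set.univ := by
    refine Set.eq_univ_of_forall fun q => ?_
    have h1 : q.1 ∈ ⋃ i, B i := hBu ▸ Set.mem_univ _
    have h2 : q.2 ∈ ⋃ j, B j := hBu ▸ Set.mem_univ _
    obtain ⟨i, hi⟩ := Set.mem_iUnion.1 h1
    obtain ⟨j, hj⟩ := Set.mem_iUnion.1 h2
    exact Set.mem_iUnion.2 ⟨(i, j), hi, hj⟩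
  have hγdecomp : ∫⁻ q : E × E, ENNReal.ofReal ‖q.1 - q.2‖ ∂γ
      = ∑' ij : ℕ × ℕ, ∫⁻ q in B ij.1 ×ˢ B ij.2, ENNReal.ofReal ‖q.1 - q.2‖ ∂γ := by
    rw [← lintegral_iUnion hScell_meas hScell_disj, hScell_cover, Measure.restrict_univ]
  have huniv : γ Set.univ = 1 := by
    have h := hγfst Set.univ MeasurableSet.univ
    rw [← Set.univ_prod_univ, h, Set.preimage_univ]
    exact measure_univ
  have hwsum : ∑' ij : ℕ × ℕ, w ij = 1 := by
    have h := measure_iUnion hScell_disj hScell_meas (μ := γ)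
    rw [hScell_cover] at h
    exact h.symm.trans huniv
  have hcellγ : ∀ ij : ℕ × ℕ,
      ((∫⁻ q in B ij.1 ×ˢ B ij.2, ENNReal.ofReal ‖q.1 - q.2‖ ∂γ) ≤ (d ij + κ) * w ij) ∧
      (d ij * w ij ≤ (∫⁻ q in B ij.1 ×ˢ B ij.2, ENNReal.ofReal ‖q.1 - q.2‖ ∂γ) + κ * w ij) := by
    intro ij
    by_cases hij : w ij = 0
    · have h0 : γ.restrict (B ij.1 ×ˢ B ij.2) = 0 := Measure.restrict_eq_zero.2 hij
      rw [h0]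
      simp [hij]
    · have hae := ae_restrict_mem (μ := γ) (hScell_meas ij)
      have hmass : γ (B ij.1 ×ˢ B ij.2) = w ij := rfl
      constructor
      · calc (∫⁻ q in B ij.1 ×ˢ B ij.2, ENNReal.ofReal ‖q.1 - q.2‖ ∂γ)
            ≤ ∫⁻ _ in B ij.1 ×ˢ B ij.2, (d ij + κ) ∂γ := by
              refine lintegral_mono_ae ?_
              filter_upwards [hae] with q hq
              exact (hptwise ij _ hq.1 _ hq.2).1
          _ = (d ij + κ) * w ij := by rw [setLIntegral_const, hmass]
      · calc d ij * w ij = ∫⁻ _ in B ij.1 ×ˢ B ij.2, d ij ∂γ := by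
              rw [setLIntegral_const, hmass]
          _ ≤ ∫⁻ q in B ij.1 ×ˢ B ij.2, (ENNReal.ofReal ‖q.1 - q.2‖ + κ) ∂γ := by
              refine lintegral_mono_ae ?_
              filter_upwards [hae] with q hq
              exact (hptwise ij _ hq.1 _ hq.2).2
          _ = (∫⁻ q in B ij.1 ×ˢ B ij.2, ENNReal.ofReal ‖q.1 - q.2‖ ∂γ) + κ * w ij := by
              rw [lintegral_add_right _ measurable_const, setLIntegral_const, hmass]
  -- decomposition of the π-integral
  have hπlint : ∫⁻ p, ENNReal.ofReal ‖f p.1 - g p.2‖ ∂π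
      = ∑' ij : ℕ × ℕ, w ij * ∫⁻ p, ENNReal.ofReal ‖f p.1 - g p.2‖ ∂((Pm ij.1).prod (Qm ij.2)) := by
    rw [hπdef, lintegral_sum_measure]
    exact tsum_congr fun ij => lintegral_smul_measure _ _
  refine ⟨π, hπprob, hfst, hsnd, ?_, ?_⟩
  · -- upper bound for the π cost
    calc ∫⁻ p, ENNReal.ofReal ‖f p.1 - g p.2‖ ∂π
        = ∑' ij : ℕ × ℕ, w ij * ∫⁻ p, ENNReal.ofReal ‖f p.1 - g p.2‖
            ∂((Pm ij.1).prod (Qm ij.2)) := hπlint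
      _ ≤ ∑' ij : ℕ × ℕ, (d ij * w ij + κ * w ij) := by
          refine ENNReal.tsum_le_tsum fun ij => ?_
          by_cases hij : w ij = 0
          · simp [hij]
          · calc w ij * ∫⁻ p, ENNReal.ofReal ‖f p.1 - g p.2‖ ∂((Pm ij.1).prod (Qm ij.2))
                ≤ w ij * (d ij + κ) := mul_le_mul_right (hcellπ ij hij).1 _
              _ = d ij * w ij + κ * w ij := by ring
      _ = (∑' ij : ℕ × ℕ, d ij * w ij) + κ := by
          rw [ENNReal.tsum_add, ENNReal.tsum_mul_left, hwsum, mul_one]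
      _ ≤ ((∫⁻ q : E × E, ENNReal.ofReal ‖q.1 - q.2‖ ∂γ) + κ) + κ := by
          gcongr
          calc (∑' ij : ℕ × ℕ, d ij * w ij)
              ≤ ∑' ij : ℕ × ℕ, ((∫⁻ q in B ij.1 ×ˢ B ij.2, ENNReal.ofReal ‖q.1 - q.2‖ ∂γ)
                  + κ * w ij) := ENNReal.tsum_le_tsum fun ij => (hcellγ ij).2
            _ = (∫⁻ q : E × E, ENNReal.ofReal ‖q.1 - q.2‖ ∂γ) + κ := by
                rw [ENNReal.tsum_add, ← hγdecomp, ENNReal.tsum_mul_left, hwsum, mul_one]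
      _ = (∫⁻ q : E × E, ENNReal.ofReal ‖q.1 - q.2‖ ∂γ) + ENNReal.ofReal δ := by
          rw [add_assoc, hκκ]
  · -- lower bound: the γ cost is controlled by the π cost
    calc ∫⁻ q : E × E, ENNReal.ofReal ‖q.1 - q.2‖ ∂γ
        = ∑' ij : ℕ × ℕ, ∫⁻ q in B ij.1 ×ˢ B ij.2, ENNReal.ofReal ‖q.1 - q.2‖ ∂γ := hγdecomp
      _ ≤ ∑' ij : ℕ × ℕ, (d ij + κ) * w ij := ENNReal.tsum_le_tsum fun ij => (hcellγ ij).1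
      _ = (∑' ij : ℕ × ℕ, d ij * w ij) + κ := by
          have : ∀ ij : ℕ × ℕ, (d ij + κ) * w ij = d ij * w ij + κ * w ij := fun ij => by ring
          rw [tsum_congr this, ENNReal.tsum_add, ENNReal.tsum_mul_left, hwsum, mul_one]
      _ ≤ ((∫⁻ p, ENNReal.ofReal ‖f p.1 - g p.2‖ ∂π) + κ) + κ := by
          gcongr
          calc (∑' ij : ℕ × ℕ, d ij * w ij)
              ≤ ∑' ij : ℕ × ℕ, (w ij * (∫⁻ p, ENNReal.ofReal ‖f p.1 - g p.2‖
                  ∂((Pm ij.1).prod (Qm ij.2))) + κ * w ij) := by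
                refine ENNReal.tsum_le_tsum fun ij => ?_
                by_cases hij : w ij = 0
                · simp [hij]
                · calc d ij * w ij ≤ ((∫⁻ p, ENNReal.ofReal ‖f p.1 - g p.2‖
                        ∂((Pm ij.1).prod (Qm ij.2))) + κ) * w ij :=
                        mul_le_mul_left (hcellπ ij hij).2 _
                    _ = w ij * (∫⁻ p, ENNReal.ofReal ‖f p.1 - g p.2‖
                        ∂((Pm ij.1).prod (Qm ij.2))) + κ * w ij := by ring
            _ = (∫⁻ p, ENNReal.ofReal ‖f p.1 - g p.2‖ ∂π) + κ := by
                rw [ENNReal.tsum_add, ← hπlint, ENNReal.tsum_mul_left, hwsum, mul_one]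
      _ = (∫⁻ p, ENNReal.ofReal ‖f p.1 - g p.2‖ ∂π) + ENNReal.ofReal δ := by
          rw [add_assoc, hκκ]

end AuxLift

open NestedDistribution in
theorem isBicausalCoupling_clairvoyant_one_iff {T D : ℕ} (N M : NestedDistribution T D)
    (π : Measure (N.Ω × M.Ω)) :
    IsBicausalCoupling (N.clairvoyant 1) (M.clairvoyant 1) π ↔
      IsProbabilityMeasure π ∧ π.map Prod.fst = N.P ∧ π.map Prod.snd = M.P := by
  constructor
  · rintro ⟨h1, h2, h3, -, -⟩
    exact ⟨h1, h2, h3⟩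
  · rintro ⟨h1, h2, h3⟩
    haveI := h1
    haveI := (N.clairvoyant 1).prob
    haveI := (M.clairvoyant 1).prob
    haveI := N.prob
    haveI := M.prob
    have hFTN : (N.clairvoyant 1).F T = N.F T := by
      show (if T < 1 then N.F T else N.F (max T T)) = N.F T
      rw [max_self]
      split <;> rfl
    have hFTM : (M.clairvoyant 1).F T = M.F T := by
      show (if T < 1 then M.F T else M.F (max T T)) = M.F T
      rw [max_self]
      split <;> rfl
    refine ⟨h1, h2, h3, ?_, ?_⟩
    · intro t ht1 ht2 A hA
      have hFt : (N.clairvoyant 1).F t = N.F T := by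
        show (if t < 1 then N.F t else N.F (max t T)) = N.F T
        rw [if_neg (by omega), max_eq_right ht2]
      have hFt' : (M.clairvoyant 1).F t = M.F T := by
        show (if t < 1 then M.F t else M.F (max t T)) = M.F T
        rw [if_neg (by omega), max_eq_right ht2]
      rw [hFTN] at hA
      rw [hFt, hFt']
      have hle : (N.F T).prod (M.F T) ≤ (N.m).prod (M.m) :=
        sup_le_sup (MeasurableSpace.comap_mono (N.F_le T))
          (MeasurableSpace.comap_mono (M.F_le T))
      have hAm : MeasurableSet[(N.F T).prod (M.F T)]
          (A ×ˢ (Set.univ : Set M.Ω)) :=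
        @MeasurableSet.prod _ _ (N.F T) (M.F T) _ _ hA MeasurableSet.univ
      have hL : π[((A ×ˢ (Set.univ : Set M.Ω)).indicator fun _ => (1 : ℝ)) |
            (N.F T).prod (M.F T)] = (A ×ˢ (Set.univ : Set M.Ω)).indicator fun _ => (1 : ℝ) :=
        condExp_of_stronglyMeasurable hle
          ((@stronglyMeasurable_const _ _ ((N.F T).prod (M.F T)) _ _).indicator hAm)
          ((integrable_const (1 : ℝ)).indicator
            (((N.F_le T) _ hA).prod MeasurableSet.univ))
      have hR : N.P[(A.indicator fun _ => (1 : ℝ)) | N.F T]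
          = A.indicator fun _ => (1 : ℝ) :=
        condExp_of_stronglyMeasurable (N.F_le T)
          ((@stronglyMeasurable_const _ _ (N.F T) _ _).indicator hA)
          ((integrable_const (1 : ℝ)).indicator ((N.F_le T) _ hA))
      show π[((A ×ˢ (Set.univ : Set M.Ω)).indicator fun _ => (1 : ℝ)) |
          (N.F T).prod (M.F T)] =ᵐ[π] fun p => (N.P[(A.indicator fun _ => (1 : ℝ)) | N.F T]) p.1
      rw [hL, hR]
      refine Filter.Eventually.of_forall fun p => ?_
      by_cases hp : p.1 ∈ A
      · exact (Set.indicator_of_mem (Set.mem_prod.2 ⟨hp, Set.mem_univ _⟩) _).trans (Set.indicator_of_mem hp (fun _ => (1 : ℝ))).symm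
      · exact (Set.indicator_of_notMem (fun h => hp (Set.mem_prod.1 h).1) _).trans (Set.indicator_of_notMem hp _).symm
    · intro t ht1 ht2 A hA
      have hFt : (N.clairvoyant 1).F t = N.F T := by
        show (if t < 1 then N.F t else N.F (max t T)) = N.F T
        rw [if_neg (by omega), max_eq_right ht2]
      have hFt' : (M.clairvoyant 1).F t = M.F T := by
        show (if t < 1 then M.F t else M.F (max t T)) = M.F T
        rw [if_neg (by omega), max_eq_right ht2]
      rw [hFTM] at hA
      rw [hFt, hFt']
      have hle : (N.F T).prod (M.F T) ≤ (N.m).prod (M.m) :=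
        sup_le_sup (MeasurableSpace.comap_mono (N.F_le T))
          (MeasurableSpace.comap_mono (M.F_le T))
      have hAm : MeasurableSet[(N.F T).prod (M.F T)]
          ((Set.univ : Set N.Ω) ×ˢ A) :=
        @MeasurableSet.prod _ _ (N.F T) (M.F T) _ _ MeasurableSet.univ hA
      have hL : π[(((Set.univ : Set N.Ω) ×ˢ A).indicator fun _ => (1 : ℝ)) |
            (N.F T).prod (M.F T)] = ((Set.univ : Set N.Ω) ×ˢ A).indicator fun _ => (1 : ℝ) :=
        condExp_of_stronglyMeasurable hle
          ((@stronglyMeasurable_const _ _ ((N.F T).prod (M.F T)) _ _).indicator hAm)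
          ((integrable_const (1 : ℝ)).indicator
            (MeasurableSet.univ.prod ((M.F_le T) _ hA)))
      have hR : M.P[(A.indicator fun _ => (1 : ℝ)) | M.F T]
          = A.indicator fun _ => (1 : ℝ) :=
        condExp_of_stronglyMeasurable (M.F_le T)
          ((@stronglyMeasurable_const _ _ (M.F T) _ _).indicator hA)
          ((integrable_const (1 : ℝ)).indicator ((M.F_le T) _ hA))
      show π[(((Set.univ : Set N.Ω) ×ˢ A).indicator fun _ => (1 : ℝ)) |
          (N.F T).prod (M.F T)] =ᵐ[π] fun p => (M.P[(A.indicator fun _ => (1 : ℝ)) | M.F T]) p.2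
      rw [hL, hR]
      refine Filter.Eventually.of_forall fun p => ?_
      by_cases hp : p.2 ∈ A
      · exact (Set.indicator_of_mem (Set.mem_prod.2 ⟨Set.mem_univ _, hp⟩) _).trans (Set.indicator_of_mem hp (fun _ => (1 : ℝ))).symm
      · exact (Set.indicator_of_notMem (fun h => hp (Set.mem_prod.1 h).2) _).trans (Set.indicator_of_notMem hp _).symm

theorem nested_cost_eq {T D : ℕ} (N M : NestedDistribution T D) (u : N.Ω) (v : M.Ω) :
    ∑ t ∈ Finset.Icc 1 T, ‖N.ξ t u - M.ξ t v‖ = ‖N.hist T u - M.hist T v‖ := by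
  have hnorm : ‖N.hist T u - M.hist T v‖
      = ∑ s : Fin T, ‖N.ξ (s.1 + 1) u - M.ξ (s.1 + 1) v‖ := by
    rw [PiLp.norm_eq_sum (p := 1) (by simp)]
    simp [Real.rpow_one]
    simp [NestedDistribution.hist]
  rw [hnorm, Fin.sum_univ_eq_sum_range (fun s => ‖N.ξ (s + 1) u - M.ξ (s + 1) v‖) T,
    ← Finset.Ico_add_one_right_eq_Icc, Finset.sum_Ico_eq_sum_range]
  simp [Nat.add_comm]

open NestedDistribution in
/-- For any two nested distributions `P` and `P̃` of the same depth `T` and dimension `D`,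
the nested distance between their `1`-clairvoyant versions equals the Kantorovich–Wasserstein
distance between the laws of the two scenario processes on `ℝ^{D·T}`. -/
theorem nestedDist_clairvoyant_one_eq_kantorovich (T D : ℕ)
    (N M : NestedDistribution T D) :
    NestedDistribution.dist (N.clairvoyant 1) (M.clairvoyant 1) =
      kantorovich N.pathLaw M.pathLaw := by
  classical
  haveI := N.prob
  haveI := M.prob
  haveI : IsProbabilityMeasure N.pathLaw :=
    Measure.isProbabilityMeasure_map (N.measurable_hist T).aemeasurable
  haveI : IsProbabilityMeasure M.pathLaw :=
    Measure.isProbabilityMeasure_map (M.measurable_hist T).aemeasurable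
  set S1 : Set ℝ := {r : ℝ | ∃ π : Measure (N.Ω × M.Ω),
      NestedDistribution.IsBicausalCoupling (N.clairvoyant 1) (M.clairvoyant 1) π ∧
      r = ∫ p, ∑ t ∈ Finset.Icc 1 T, ‖N.ξ t p.1 - M.ξ t p.2‖ ∂π} with hS1def
  set S2 : Set ℝ := {r : ℝ | ∃ π : Measure (PathSpace T D × PathSpace T D),
      IsProbabilityMeasure π ∧ π.map Prod.fst = N.pathLaw ∧ π.map Prod.snd = M.pathLaw ∧
      r = ∫ p, ‖p.1 - p.2‖ ∂π} with hS2def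
  have hdist : NestedDistribution.dist (N.clairvoyant 1) (M.clairvoyant 1) = sInf S1 := rfl
  have hkant : kantorovich N.pathLaw M.pathLaw = sInf S2 := rfl
  have hcostfun : (fun p : N.Ω × M.Ω => ∑ t ∈ Finset.Icc 1 T, ‖N.ξ t p.1 - M.ξ t p.2‖)
      = fun p => ‖N.hist T p.1 - M.hist T p.2‖ :=
    funext fun p => nested_cost_eq N M p.1 p.2
  have hsubmeas : Measurable fun p : N.Ω × M.Ω => N.hist T p.1 - M.hist T p.2 :=
    ((N.measurable_hist T).comp measurable_fst).sub
      ((M.measurable_hist T).comp measurable_snd)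
  have hS1ne : S1.Nonempty := by
    refine ⟨_, N.P.prod M.P, ?_, rfl⟩
    refine (isBicausalCoupling_clairvoyant_one_iff N M _).2 ⟨inferInstance, ?_, ?_⟩
    · rw [Measure.map_fst_prod, measure_univ, one_smul]
    · rw [Measure.map_snd_prod, measure_univ, one_smul]
  have hS2ne : S2.Nonempty := by
    refine ⟨_, N.pathLaw.prod M.pathLaw, inferInstance, ?_, ?_, rfl⟩
    · rw [Measure.map_fst_prod, measure_univ, one_smul]
    · rw [Measure.map_snd_prod, measure_univ, one_smul]
  have hS1bdd : BddBelow S1 := by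
    refine ⟨0, fun r hr => ?_⟩
    obtain ⟨π, -, hr⟩ := hr
    exact hr ▸ integral_nonneg fun p => Finset.sum_nonneg fun t _ => norm_nonneg _
  have hS2bdd : BddBelow S2 := by
    refine ⟨0, fun r hr => ?_⟩
    obtain ⟨π, -, -, -, hr⟩ := hr
    exact hr ▸ integral_nonneg fun p => norm_nonneg _
  rw [hdist, hkant]
  refine le_antisymm ?_ (csInf_le_csInf hS2bdd hS1ne ?_)
  · -- sInf S1 ≤ sInf S2 via the lifting of couplings
    refine le_csInf hS2ne fun r hr => ?_
    obtain ⟨γ, hγp, hγ1, hγ2, hrint⟩ := hr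
    haveI := hγp
    refine le_of_forall_pos_le_add fun ε hε => ?_
    obtain ⟨π, hπp, hπ1, hπ2, hub, hlb⟩ :=
      lift_coupling N.P M.P (N.measurable_hist T) (M.measurable_hist T) γ hγ1 hγ2 hε
    have hmemb : (∫ p, ∑ t ∈ Finset.Icc 1 T, ‖N.ξ t p.1 - M.ξ t p.2‖ ∂π) ∈ S1 :=
      ⟨π, (isBicausalCoupling_clairvoyant_one_iff N M π).2 ⟨hπp, hπ1, hπ2⟩, rfl⟩
    refine le_trans (csInf_le hS1bdd hmemb) ?_
    have hπint : ∫ p, ∑ t ∈ Finset.Icc 1 T, ‖N.ξ t p.1 - M.ξ t p.2‖ ∂π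
        = (∫⁻ p, ENNReal.ofReal ‖N.hist T p.1 - M.hist T p.2‖ ∂π).toReal := by
      rw [hcostfun]
      exact integral_eq_lintegral_of_nonneg_ae
        (Filter.Eventually.of_forall fun p => norm_nonneg _)
        hsubmeas.norm.aestronglyMeasurable
    have hγint : r = (∫⁻ q : PathSpace T D × PathSpace T D,
        ENNReal.ofReal ‖q.1 - q.2‖ ∂γ).toReal := by
      rw [hrint]
      exact integral_eq_lintegral_of_nonneg_ae
        (Filter.Eventually.of_forall fun q => norm_nonneg _)
        (continuous_fst.sub continuous_snd).norm.aestronglyMeasurable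
    by_cases hfin : (∫⁻ q : PathSpace T D × PathSpace T D,
        ENNReal.ofReal ‖q.1 - q.2‖ ∂γ) = ⊤
    · have hπtop : (∫⁻ p, ENNReal.ofReal ‖N.hist T p.1 - M.hist T p.2‖ ∂π) = ⊤ := by
        by_contra h
        have h2 := hlb
        rw [hfin, top_le_iff] at h2
        rcases ENNReal.add_eq_top.1 h2 with h3 | h3
        · exact h h3
        · exact ENNReal.ofReal_ne_top h3
      rw [hπint, hπtop, hγint, hfin]
      simp only [ENNReal.toReal_top]
      linarith
    · have hsum_ne : (∫⁻ q : PathSpace T D × PathSpace T D,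
          ENNReal.ofReal ‖q.1 - q.2‖ ∂γ) + ENNReal.ofReal ε ≠ ⊤ :=
        ENNReal.add_ne_top.2 ⟨hfin, ENNReal.ofReal_ne_top⟩
      rw [hπint, hγint]
      calc (∫⁻ p, ENNReal.ofReal ‖N.hist T p.1 - M.hist T p.2‖ ∂π).toReal
          ≤ ((∫⁻ q : PathSpace T D × PathSpace T D,
              ENNReal.ofReal ‖q.1 - q.2‖ ∂γ) + ENNReal.ofReal ε).toReal :=
            ENNReal.toReal_mono hsum_ne hub
        _ = (∫⁻ q : PathSpace T D × PathSpace T D,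
              ENNReal.ofReal ‖q.1 - q.2‖ ∂γ).toReal + ε := by
            rw [ENNReal.toReal_add hfin ENNReal.ofReal_ne_top,
              ENNReal.toReal_ofReal hε.le]
  · -- S1 ⊆ S2 via push-forward
    rintro r ⟨π, hbc, hr⟩
    obtain ⟨hπp, hπ1, hπ2⟩ := (isBicausalCoupling_clairvoyant_one_iff N M π).1 hbc
    haveI := hπp
    have hh : Measurable fun p : N.Ω × M.Ω => (N.hist T p.1, M.hist T p.2) :=
      ((N.measurable_hist T).comp measurable_fst).prodMk
        ((M.measurable_hist T).comp measurable_snd)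
    refine ⟨π.map (fun p => (N.hist T p.1, M.hist T p.2)),
      Measure.isProbabilityMeasure_map hh.aemeasurable, ?_, ?_, ?_⟩
    · rw [Measure.map_map measurable_fst hh]
      have : (Prod.fst ∘ fun p : N.Ω × M.Ω => (N.hist T p.1, M.hist T p.2))
          = N.hist T ∘ Prod.fst := rfl
      rw [this, ← Measure.map_map (N.measurable_hist T) measurable_fst, hπ1]
      rfl
    · rw [Measure.map_map measurable_snd hh]
      have : (Prod.snd ∘ fun p : N.Ω × M.Ω => (N.hist T p.1, M.hist T p.2))
          = M.hist T ∘ Prod.snd := rfl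
      rw [this, ← Measure.map_map (M.measurable_hist T) measurable_snd, hπ2]
      rfl
    · rw [hr, hcostfun]
      exact (integral_map hh.aemeasurable
          (continuous_fst.sub continuous_snd).norm.aestronglyMeasurable).symm


end
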